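/- Let R be an n×n complex positive definite matrix, ε > 0 a real number, and q a real number with 1 ≤ q ≤ 2. Then Tr((R + ε²·I)^q) ≤ Tr(R^q) + 2ε²·Tr(R^{q−1}) + ε⁴·Tr(R^{q−2}). Consequently, Tr((R/ε + ε·I)^q) − Tr((R/ε)^q) − Tr((ε·I)^q) ≤ 2ε^{2−q}·Tr(R^{q−1}) + ε^{4−q}·Tr(R^{q−2}), which tends to 0 as ε → 0 when q < 2. -/

import Mathlib

/-! Diagonalising `R` reduces both bounds to its eigenvalues `λ > 0`. Since `q ≤ 2`, the map
`x ↦ x ^ (q - 2)` is antitone on `(0, ∞)`, so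
`(λ + ε²) ^ q = (λ + ε²) ^ (q - 2) (λ + ε²)² ≤ λ ^ (q - 2) (λ + ε²)²`, and expanding the square gives
the first bound. The second is the first multiplied by `ε ^ (-q)`, because
`R / ε + ε I = ε⁻¹ (R + ε² I)`, after dropping the nonnegative term `Tr((ε I) ^ q)`. -/

open Matrix
open scoped ComplexOrder

/-- Matrix power of a Hermitian (positive semidefinite) matrix via the
continuous functional calculus: `A ^ q`. -/
noncomputable def hermPow {n : Type*} [Fintype n] [DecidableEq n]
    (A : Matrix n n ℂ) (q : ℝ) : Matrix n n ℂ :=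
  cfc (fun x : ℝ => x ^ q) A

/-- The positive semidefinite square root of a positive semidefinite matrix, as
`Matrix.PosSemidef.sqrt` was defined in the older Mathlib. -/
noncomputable def Matrix.PosSemidef.sqrtOld {n : Type*} [Fintype n] [DecidableEq n]
    {A : Matrix n n ℂ} (hA : A.PosSemidef) : Matrix n n ℂ :=
  hA.1.eigenvectorUnitary.1 * diagonal ((↑) ∘ (√·) ∘ hA.1.eigenvalues) *
  (star hA.1.eigenvectorUnitary : Matrix n n ℂ)

/-- Schatten `q`-norm of a complex matrix `T`:
`‖T‖_q = (Tr(|T|^q))^(1/q)` with `|T| = (Tᴴ T)^(1/2)`. -/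
noncomputable def schattenQ {m n : Type*} [Fintype m] [Fintype n] [DecidableEq n]
    (q : ℝ) (T : Matrix m n ℂ) : ℝ :=
  ((hermPow (Matrix.posSemidef_conjTranspose_mul_self T).sqrtOld q).trace).re

/-- Geometric mean of positive definite matrices:
`A # B = A^(1/2) (A^(-1/2) B A^(-1/2))^(1/2) A^(1/2)`. -/
noncomputable def geomMean {n : Type*} [Fintype n] [DecidableEq n]
    (A B : Matrix n n ℂ) : Matrix n n ℂ :=
  hermPow A (1/2) * hermPow (hermPow A (-(1/2)) * B * hermPow A (-(1/2))) (1/2) *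
    hermPow A (1/2)

/-- The Thompson-type metric `δ_∞(A, B) = max_{λ ∈ spec(A B⁻¹)} |log λ|`
(for positive definite `A`, `B` the eigenvalues of `A B⁻¹` are positive reals). -/
noncomputable def deltaInf {n : Type*} [Fintype n] [DecidableEq n]
    (A B : Matrix n n ℂ) : ℝ :=
  sSup {x : ℝ | ∃ μ ∈ spectrum ℂ (A * B⁻¹), x = |Real.log ‖μ‖|}

open Finset

namespace Matrix.IsHermitian

variable {n 𝕜 : Type*} [Fintype n] [DecidableEq n] [RCLike 𝕜] {A : Matrix n n 𝕜}

lemma trace_cfc (hA : A.IsHermitian) (f : ℝ → ℝ) :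
    (cfc f A).trace = ∑ i, (f (hA.eigenvalues i) : 𝕜) := by
  rw [hA.cfc_eq, IsHermitian.cfc, Unitary.conjStarAlgAut_apply, trace_mul_cycle,
    Unitary.coe_star_mul_self, one_mul, trace_diagonal]
  rfl

end Matrix.IsHermitian

lemma cfc_const_mul_add_const {A : Type*} {p : A → Prop} [Ring A] [StarRing A]
    [TopologicalSpace A] [Algebra ℝ A] [ContinuousFunctionalCalculus ℝ A p]
    (r s : ℝ) (a : A) (ha : p a) : cfc (fun x => r * x + s) a = r • a + s • 1 := by
  rw [cfc_add_const s _ a (by fun_prop) ha, cfc_const_mul_id r a ha,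
    Algebra.algebraMap_eq_smul_one]

section hermPow

variable {n : Type*} [Fintype n] [DecidableEq n] {A : Matrix n n ℂ}

lemma hermPow_cfc (hA : IsSelfAdjoint A) (f : ℝ → ℝ) (q : ℝ) :
    hermPow (cfc f A) q = cfc (fun x => f x ^ q) A := by
  have hfin := Matrix.finite_real_spectrum (A := A)
  exact (cfc_comp (· ^ q) f A hA ((hfin.image f).continuousOn _) (hfin.continuousOn f)).symm

lemma re_trace_hermPow (hA : A.IsHermitian) (q : ℝ) :
    (hermPow A q).trace.re = ∑ i, hA.eigenvalues i ^ q := by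
  simp [hermPow, hA.trace_cfc, Complex.re_sum]

lemma re_trace_hermPow_smul_add_smul_one (hA : A.IsHermitian) (r s q : ℝ) :
    (hermPow (r • A + s • 1) q).trace.re = ∑ i, (r * hA.eigenvalues i + s) ^ q := by
  rw [← cfc_const_mul_add_const r s A hA.isSelfAdjoint, hermPow_cfc hA]
  simp [hA.trace_cfc, Complex.re_sum]

end hermPow

namespace Real

lemma add_sq_rpow_le {a q : ℝ} (ε : ℝ) (ha : 0 < a) (hq : q ≤ 2) :
    (a + ε ^ 2) ^ q ≤ a ^ q + 2 * ε ^ 2 * a ^ (q - 1) + ε ^ 4 * a ^ (q - 2) := by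
  have hb : 0 < a + ε ^ 2 := by positivity
  calc (a + ε ^ 2) ^ q = (a + ε ^ 2) ^ (q - 2) * (a + ε ^ 2) ^ 2 := by
        rw [rpow_sub hb, rpow_two, div_mul_cancel₀ _ (by positivity)]
    _ ≤ a ^ (q - 2) * (a + ε ^ 2) ^ 2 := by
        have hle : a ≤ a + ε ^ 2 := le_add_of_nonneg_right (sq_nonneg ε)
        gcongr ?_ * _
        exact rpow_le_rpow_of_nonpos ha hle (by linarith)
    _ = _ := by
        rw [rpow_sub ha, rpow_sub ha, rpow_two, rpow_one]
        field_simp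
        ring

lemma inv_mul_add_rpow_sub_le {a ε q : ℝ} (ha : 0 < a) (hε : 0 < ε) (hq : q ≤ 2) :
    (ε⁻¹ * a + ε) ^ q - (ε⁻¹ * a) ^ q
      ≤ 2 * ε ^ (2 - q) * a ^ (q - 1) + ε ^ (4 - q) * a ^ (q - 2) := by
  have hscale : ∀ k : ℝ, ε ^ (k - q) = ε ^ k * ε⁻¹ ^ q := fun k => by
    rw [rpow_sub hε, inv_rpow hε.le, div_eq_mul_inv]
  have hsplit : ε⁻¹ * a + ε = ε⁻¹ * (a + ε ^ 2) := by field_simp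
  rw [hsplit, mul_rpow (by positivity) (by positivity), mul_rpow (by positivity) ha.le,
    ← mul_sub, hscale, hscale, rpow_ofNat, rpow_ofNat]
  calc ε⁻¹ ^ q * ((a + ε ^ 2) ^ q - a ^ q)
      ≤ ε⁻¹ ^ q * (2 * ε ^ 2 * a ^ (q - 1) + ε ^ 4 * a ^ (q - 2)) := by
        gcongr
        linarith [add_sq_rpow_le ε ha hq]
    _ = _ := by ring

end Real

theorem trace_perturbation_bound_general {n : ℕ} (R : Matrix (Fin n) (Fin n) ℂ)
    (hR : R.PosDef) (ε : ℝ) (hε : 0 < ε) (q : ℝ) (hq2 : q ≤ 2) :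
    ((hermPow (R + ε ^ 2 • (1 : Matrix (Fin n) (Fin n) ℂ)) q).trace).re
        ≤ ((hermPow R q).trace).re + 2 * ε ^ 2 * ((hermPow R (q - 1)).trace).re
          + ε ^ 4 * ((hermPow R (q - 2)).trace).re ∧
      ((hermPow (ε⁻¹ • R + ε • (1 : Matrix (Fin n) (Fin n) ℂ)) q).trace).re
          - ((hermPow (ε⁻¹ • R) q).trace).re
          - ((hermPow (ε • (1 : Matrix (Fin n) (Fin n) ℂ)) q).trace).re
        ≤ 2 * ε ^ (2 - q) * ((hermPow R (q - 1)).trace).re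
          + ε ^ (4 - q) * ((hermPow R (q - 2)).trace).re := by
  have hA := hR.isHermitian
  have tr := re_trace_hermPow_smul_add_smul_one hA (q := q)
  have tr₁ := tr 1 (ε ^ 2)
  have tr₂ := tr ε⁻¹ ε
  have tr₃ := tr ε⁻¹ 0
  have tr₄ := tr 0 ε
  simp only [one_smul, one_mul, zero_smul, add_zero, zero_mul, zero_add] at tr₁ tr₃ tr₄
  simp only [re_trace_hermPow hA, tr₁, tr₂, tr₃, tr₄, mul_sum, ← sum_add_distrib]
  have hpos := hR.eigenvalues_pos
  refine ⟨sum_le_sum fun i _ => Real.add_sq_rpow_le ε (hpos i) hq2, ?_⟩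
  have hdrop : 0 ≤ ∑ _i : Fin n, ε ^ q := sum_nonneg fun _ _ => by positivity
  have := sum_le_sum fun i (_ : i ∈ univ) => Real.inv_mul_add_rpow_sub_le (hpos i) hε hq2
  rw [sum_sub_distrib] at this
  linarith

/-- For positive definite `R`, `ε > 0` and `1 ≤ q ≤ 2`:
`Tr((R + ε²I)^q) ≤ Tr(R^q) + 2ε² Tr(R^(q-1)) + ε⁴ Tr(R^(q-2))`, and consequently
`Tr((R/ε + εI)^q) - Tr((R/ε)^q) - Tr((εI)^q)
  ≤ 2ε^(2-q) Tr(R^(q-1)) + ε^(4-q) Tr(R^(q-2))`. -/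
theorem trace_perturbation_bound {n : ℕ} (R : Matrix (Fin n) (Fin n) ℂ)
    (hR : R.PosDef) (ε : ℝ) (hε : 0 < ε) (q : ℝ) (hq1 : 1 ≤ q) (hq2 : q ≤ 2) :
    ((hermPow (R + ε ^ 2 • (1 : Matrix (Fin n) (Fin n) ℂ)) q).trace).re
        ≤ ((hermPow R q).trace).re + 2 * ε ^ 2 * ((hermPow R (q - 1)).trace).re
          + ε ^ 4 * ((hermPow R (q - 2)).trace).re ∧
      ((hermPow (ε⁻¹ • R + ε • (1 : Matrix (Fin n) (Fin n) ℂ)) q).trace).re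
          - ((hermPow (ε⁻¹ • R) q).trace).re
          - ((hermPow (ε • (1 : Matrix (Fin n) (Fin n) ℂ)) q).trace).re
        ≤ 2 * ε ^ (2 - q) * ((hermPow R (q - 1)).trace).re
          + ε ^ (4 - q) * ((hermPow R (q - 2)).trace).re :=
  trace_perturbation_bound_general R hR ε hε q hq2
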